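/- arXiv:2012.08144 — 2 statements merged into one kernel-verified Lean document; each statement's English description precedes it below -/
import Mathlib

section
/- Let m ≥ 5 and let i, j ∈ {1,2,3} with i ≠ j. Then Z_m^i ∩ Z_m^j ⊆ Z_m^0; equivalently, I_m^0 ⊆ √(I_m^i + I_m^j). -/
noncomputable section

open MvPolynomial

/-- `R m = ℂ[x_0,…,x_m, y_0,…,y_m, z_0,…,z_m]`. -/
abbrev R (m : ℕ) : Type := MvPolynomial (Fin 3 × Fin (m + 1)) ℂ

/-- the variable `x_i` (for `i ≤ m`). -/
def Xv (m i : ℕ) : R m := if h : i < m + 1 then X (0, ⟨i, h⟩) else 0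
/-- the variable `y_i` (for `i ≤ m`). -/
def Yv (m i : ℕ) : R m := if h : i < m + 1 then X (1, ⟨i, h⟩) else 0
/-- the variable `z_i` (for `i ≤ m`). -/
def Zv (m i : ℕ) : R m := if h : i < m + 1 then X (2, ⟨i, h⟩) else 0

/-- `Σ_{i=0}^m x_i t^i`. -/
def xSer (m : ℕ) : Polynomial (R m) :=
  ∑ i ∈ Finset.range (m + 1), Polynomial.C (Xv m i) * Polynomial.X ^ i
/-- `Σ_{i=0}^m y_i t^i`. -/
def ySer (m : ℕ) : Polynomial (R m) :=
  ∑ i ∈ Finset.range (m + 1), Polynomial.C (Yv m i) * Polynomial.X ^ i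
/-- `Σ_{i=0}^m z_i t^i`. -/
def zSer (m : ℕ) : Polynomial (R m) :=
  ∑ i ∈ Finset.range (m + 1), Polynomial.C (Zv m i) * Polynomial.X ^ i

/-- `f^{(j)}`: the coefficient of `t^j` in
`f(Σ x_i t^i, Σ y_i t^i, Σ z_i t^i)` for `f = x² − y²z + z³` (the `D₄` singularity). -/
def fD (m j : ℕ) : R m :=
  (xSer m ^ 2 - ySer m ^ 2 * zSer m + zSer m ^ 3).coeff j

/-- The ideal `⟨f^{(0)},…,f^{(m)}⟩`. -/
def FId (m : ℕ) : Ideal (R m) := Ideal.span {g | ∃ j ≤ m, g = fD m j}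

/-- `I_m^0 = ⟨x_0, x_1, x_2, y_0, y_1, z_0, z_1, f^{(0)},…,f^{(m)}⟩`. -/
def I0 (m : ℕ) : Ideal (R m) :=
  Ideal.span {Xv m 0, Xv m 1, Xv m 2, Yv m 0, Yv m 1, Zv m 0, Zv m 1} ⊔ FId m

/-- `J_m^1 = ⟨x_0, x_1, y_0, z_0, z_1, f^{(0)},…,f^{(m)}⟩`,
`J_m^2 = ⟨x_0, x_1, y_0, z_0, y_1 − z_1, f^{(0)},…,f^{(m)}⟩`,
`J_m^3 = ⟨x_0, x_1, y_0, z_0, y_1 + z_1, f^{(0)},…,f^{(m)}⟩`. -/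
def Jd (m : ℕ) : ℕ → Ideal (R m)
  | 2 => Ideal.span {Xv m 0, Xv m 1, Yv m 0, Zv m 0, Yv m 1 - Zv m 1} ⊔ FId m
  | 3 => Ideal.span {Xv m 0, Xv m 1, Yv m 0, Zv m 0, Yv m 1 + Zv m 1} ⊔ FId m
  | _ => Ideal.span {Xv m 0, Xv m 1, Yv m 0, Zv m 0, Zv m 1} ⊔ FId m

/-- The contraction to `R_m` of the extension of `J` to the localization of `R_m`
away from `g`. -/
def contrAway (m : ℕ) (g : R m) (J : Ideal (R m)) : Ideal (R m) :=
  (J.map (algebraMap (R m) (Localization.Away g))).comap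
    (algebraMap (R m) (Localization.Away g))

/-- `I_m^0` and, for `i = 1,2,3`, the ideal `I_m^i`: the contraction to `R_m` of the
extension of `J_m^i` to the localization of `R_m` away from `y_1`. -/
def Idl (m i : ℕ) : Ideal (R m) :=
  if i = 0 then I0 m else contrAway m (Yv m 1) (Jd m i)

/-- Points of `ℂ^{3(m+1)}`. -/
abbrev Pt (m : ℕ) := Fin 3 × Fin (m + 1) → ℂ

/-- The zero locus in `ℂ^{3(m+1)}` of an ideal of `R_m`. -/
def zl (m : ℕ) (I : Ideal (R m)) : Set (Pt m) := {x | ∀ g ∈ I, eval x g = 0}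

/-- `Z_m^i ⊆ ℂ^{3(m+1)}`, the zero locus of `I_m^i`, for `i = 0,1,2,3`. -/
def Zd (m i : ℕ) : Set (Pt m) := zl m (Idl m i)

/- STATEMENT 17: for `m ≥ 5` and `i, j ∈ {1,2,3}` with `i ≠ j`,
`Z_m^i ∩ Z_m^j ⊆ Z_m^0`; equivalently `I_m^0 ⊆ √(I_m^i + I_m^j)`. -/
lemma coeff_xSer (m k : ℕ) : (xSer m).coeff k = Xv m k := by
  unfold xSer
  rw [Polynomial.finset_sum_coeff]
  simp only [Polynomial.coeff_C_mul, Polynomial.coeff_X_pow, mul_ite, mul_one, mul_zero]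
  rw [Finset.sum_ite_eq (Finset.range (m+1)) k (Xv m)]
  split_ifs with h
  · rfl
  · unfold Xv; rw [dif_neg]; simpa [Finset.mem_range] using h

lemma coeff_ySer (m k : ℕ) : (ySer m).coeff k = Yv m k := by
  unfold ySer
  rw [Polynomial.finset_sum_coeff]
  simp only [Polynomial.coeff_C_mul, Polynomial.coeff_X_pow, mul_ite, mul_one, mul_zero]
  rw [Finset.sum_ite_eq (Finset.range (m+1)) k (Yv m)]
  split_ifs with h
  · rfl
  · unfold Yv; rw [dif_neg]; simpa [Finset.mem_range] using h

lemma coeff_zSer (m k : ℕ) : (zSer m).coeff k = Zv m k := by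
  unfold zSer
  rw [Polynomial.finset_sum_coeff]
  simp only [Polynomial.coeff_C_mul, Polynomial.coeff_X_pow, mul_ite, mul_one, mul_zero]
  rw [Finset.sum_ite_eq (Finset.range (m+1)) k (Zv m)]
  split_ifs with h
  · rfl
  · unfold Zv; rw [dif_neg]; simpa [Finset.mem_range] using h

/-- The decomposition of `f^{(4)}` as `x₂² + ` (element of `⟨x₀,x₁,y₀,y₁,z₀,z₁⟩`). -/
lemma fD4_decomp (m : ℕ) :
    fD m 4 = Xv m 2 ^ 2 + (2 * Xv m 4) * Xv m 0 + (2 * Xv m 3) * Xv m 1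
      + (-(2 * Yv m 1 * Zv m 3 + 2 * Yv m 2 * Zv m 2 + 2 * Yv m 3 * Zv m 1
            + 2 * Yv m 4 * Zv m 0 + Yv m 0 * Zv m 4)) * Yv m 0
      + (-(2 * Yv m 3 * Zv m 0 + Yv m 1 * Zv m 2)) * Yv m 1
      + (3 * Zv m 4 * Zv m 0 + 6 * Zv m 3 * Zv m 1 - Yv m 2 ^ 2 + 3 * Zv m 2 ^ 2) * Zv m 0
      + (-(2 * Yv m 1 * Yv m 2) + 3 * Zv m 2 * Zv m 1) * Zv m 1 := by
  unfold fD
  have h1 : xSer m ^ 2 = xSer m * xSer m := by ring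
  have h2 : ySer m ^ 2 * zSer m = ySer m * (ySer m * zSer m) := by ring
  have h3 : zSer m ^ 3 = zSer m * (zSer m * zSer m) := by ring
  rw [h1, h2, h3]
  simp only [Polynomial.coeff_add, Polynomial.coeff_sub, Polynomial.coeff_mul,
    coeff_xSer, coeff_ySer, coeff_zSer, Finset.Nat.sum_antidiagonal_eq_sum_range_succ_mk,
    Finset.sum_range_succ, Finset.sum_range_zero, Finset.mul_sum, Finset.sum_mul]
  norm_num
  ring

lemma Jd_le_Idl (m i : ℕ) (hi : i ≠ 0) : Jd m i ≤ Idl m i := by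
  simp only [Idl, if_neg hi, contrAway]
  exact Ideal.le_comap_map

lemma base_le_Jd (m i : ℕ) (hi : i ∈ ({1, 2, 3} : Set ℕ)) :
    Ideal.span {Xv m 0, Xv m 1, Yv m 0, Zv m 0} ⊔ FId m ≤ Jd m i := by
  have key : ∀ (e : R m),
      Ideal.span {Xv m 0, Xv m 1, Yv m 0, Zv m 0} ⊔ FId m ≤
        Ideal.span {Xv m 0, Xv m 1, Yv m 0, Zv m 0, e} ⊔ FId m := by
    intro e
    refine sup_le (le_trans ?_ le_sup_left) le_sup_right
    refine Ideal.span_le.2 fun g hg => Ideal.subset_span ?_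
    revert hg; simp; tauto
  rcases hi with h | h | h <;> subst h
  · exact key _
  · exact key _
  · exact key _

lemma main_radical (m : ℕ) (hm : 5 ≤ m) (S : Ideal (R m))
    (hb : Ideal.span {Xv m 0, Xv m 1, Yv m 0, Zv m 0} ⊔ FId m ≤ S)
    (hy1 : Yv m 1 ∈ S) (hz1 : Zv m 1 ∈ S) : Idl m 0 ≤ S.radical := by
  have hF : FId m ≤ S := le_trans le_sup_right hb
  have hgen : ∀ g ∈ ({Xv m 0, Xv m 1, Yv m 0, Zv m 0} : Set (R m)), g ∈ S := by
    intro g hg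
    exact hb (Ideal.mem_sup_left (Ideal.subset_span hg))
  have hx0 : Xv m 0 ∈ S := hgen _ (by simp)
  have hx1 : Xv m 1 ∈ S := hgen _ (by simp)
  have hy0 : Yv m 0 ∈ S := hgen _ (by simp)
  have hz0 : Zv m 0 ∈ S := hgen _ (by simp)
  have hf4 : fD m 4 ∈ S := hF (Ideal.subset_span ⟨4, by omega, rfl⟩)
  have hx2sq : Xv m 2 ^ 2 ∈ S := by
    have hd : Xv m 2 ^ 2 = fD m 4 - ((2 * Xv m 4) * Xv m 0 + (2 * Xv m 3) * Xv m 1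
      + (-(2 * Yv m 1 * Zv m 3 + 2 * Yv m 2 * Zv m 2 + 2 * Yv m 3 * Zv m 1
            + 2 * Yv m 4 * Zv m 0 + Yv m 0 * Zv m 4)) * Yv m 0
      + (-(2 * Yv m 3 * Zv m 0 + Yv m 1 * Zv m 2)) * Yv m 1
      + (3 * Zv m 4 * Zv m 0 + 6 * Zv m 3 * Zv m 1 - Yv m 2 ^ 2 + 3 * Zv m 2 ^ 2) * Zv m 0
      + (-(2 * Yv m 1 * Yv m 2) + 3 * Zv m 2 * Zv m 1) * Zv m 1) := by
      rw [fD4_decomp m]; ring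
    rw [hd]
    exact Ideal.sub_mem _ hf4 (Ideal.add_mem _ (Ideal.add_mem _ (Ideal.add_mem _
      (Ideal.add_mem _ (Ideal.add_mem _ (Ideal.mul_mem_left _ _ hx0)
        (Ideal.mul_mem_left _ _ hx1)) (Ideal.mul_mem_left _ _ hy0))
        (Ideal.mul_mem_left _ _ hy1)) (Ideal.mul_mem_left _ _ hz0))
        (Ideal.mul_mem_left _ _ hz1))
  have hx2 : Xv m 2 ∈ S.radical := ⟨2, hx2sq⟩
  have h0 : Idl m 0 = I0 m := by simp [Idl]
  rw [h0]
  refine sup_le ?_ (le_trans hF Ideal.le_radical)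
  refine Ideal.span_le.2 fun g hg => ?_
  simp only [Set.mem_insert_iff, Set.mem_singleton_iff] at hg
  rcases hg with h | h | h | h | h | h | h <;> subst h
  · exact Ideal.le_radical hx0
  · exact Ideal.le_radical hx1
  · exact hx2
  · exact Ideal.le_radical hy0
  · exact Ideal.le_radical hy1
  · exact Ideal.le_radical hz0
  · exact Ideal.le_radical hz1

lemma zl_anti (m : ℕ) {I J : Ideal (R m)} (h : I ≤ J) : zl m J ⊆ zl m I :=
  fun _ hp g hg => hp g (h hg)

lemma zl_inter_sup (m : ℕ) (I J : Ideal (R m)) :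
    zl m I ∩ zl m J ⊆ zl m ((I ⊔ J).radical) := by
  rintro p ⟨hpI, hpJ⟩ g ⟨n, hgn⟩
  rcases Submodule.mem_sup.1 hgn with ⟨a, ha, b, hb, hab⟩
  have h : (eval p g) ^ n = 0 := by
    rw [← map_pow, ← hab, map_add, hpI a ha, hpJ b hb, add_zero]
  rcases Nat.eq_zero_or_pos n with hn | hn
  · subst hn; simp at h
  · exact pow_eq_zero_iff hn.ne' |>.1 h

theorem stmt17 (m : ℕ) (hm : 5 ≤ m) (i j : ℕ)
    (hi : i ∈ ({1, 2, 3} : Set ℕ)) (hj : j ∈ ({1, 2, 3} : Set ℕ)) (hij : i ≠ j) :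
    Zd m i ∩ Zd m j ⊆ Zd m 0 ∧ Idl m 0 ≤ (Idl m i ⊔ Idl m j).radical := by
  have Jd1 : Jd m 1 = Ideal.span {Xv m 0, Xv m 1, Yv m 0, Zv m 0, Zv m 1} ⊔ FId m := rfl
  have Jd2 : Jd m 2
      = Ideal.span {Xv m 0, Xv m 1, Yv m 0, Zv m 0, Yv m 1 - Zv m 1} ⊔ FId m := rfl
  have Jd3 : Jd m 3
      = Ideal.span {Xv m 0, Xv m 1, Yv m 0, Zv m 0, Yv m 1 + Zv m 1} ⊔ FId m := rfl
  have h1 : Zv m 1 ∈ Idl m 1 := Jd_le_Idl m 1 one_ne_zero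
    (by rw [Jd1]; exact Ideal.mem_sup_left (Ideal.subset_span (by simp)))
  have h2 : Yv m 1 - Zv m 1 ∈ Idl m 2 := Jd_le_Idl m 2 (by norm_num)
    (by rw [Jd2]; exact Ideal.mem_sup_left (Ideal.subset_span (by simp)))
  have h3 : Yv m 1 + Zv m 1 ∈ Idl m 3 := Jd_le_Idl m 3 (by norm_num)
    (by rw [Jd3]; exact Ideal.mem_sup_left (Ideal.subset_span (by simp)))
  have hhalf : (MvPolynomial.C (2:ℂ)⁻¹ : R m) * 2 = 1 := by
    rw [show (2 : R m) = MvPolynomial.C 2 from (map_ofNat MvPolynomial.C 2).symm, ← map_mul]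
    norm_num
  set S : Ideal (R m) := Idl m i ⊔ Idl m j with hS
  have hyz : Yv m 1 ∈ S ∧ Zv m 1 ∈ S := by
    have half_mem : ∀ u v : R m, u - v ∈ S → u + v ∈ S → u ∈ S ∧ v ∈ S := by
      intro u v hu hv
      have hu' : u = MvPolynomial.C (2:ℂ)⁻¹ * ((u - v) + (u + v)) := by
        linear_combination (-u) * hhalf
      have hv' : v = MvPolynomial.C (2:ℂ)⁻¹ * ((u + v) - (u - v)) := by
        linear_combination (-v) * hhalf
      constructor
      · rw [hu']; exact Ideal.mul_mem_left _ _ (Ideal.add_mem _ hu hv)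
      · rw [hv']; exact Ideal.mul_mem_left _ _ (Ideal.sub_mem _ hv hu)
    have from1 : ∀ (hz : Zv m 1 ∈ S), (Yv m 1 - Zv m 1 ∈ S ∨ Yv m 1 + Zv m 1 ∈ S) →
        Yv m 1 ∈ S ∧ Zv m 1 ∈ S := by
      rintro hz (hw | hw)
      · have := Ideal.add_mem _ hw hz
        exact ⟨by simpa using this, hz⟩
      · have := Ideal.sub_mem _ hw hz
        exact ⟨by simpa using this, hz⟩
    simp only [Set.mem_insert_iff, Set.mem_singleton_iff] at hi hj
    rcases hi with rfl | rfl | rfl <;> rcases hj with rfl | rfl | rfl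
    · exact absurd rfl hij
    · exact from1 (Ideal.mem_sup_left h1) (Or.inl (Ideal.mem_sup_right h2))
    · exact from1 (Ideal.mem_sup_left h1) (Or.inr (Ideal.mem_sup_right h3))
    · exact from1 (Ideal.mem_sup_right h1) (Or.inl (Ideal.mem_sup_left h2))
    · exact absurd rfl hij
    · exact half_mem _ _ (Ideal.mem_sup_left h2) (Ideal.mem_sup_right h3)
    · exact from1 (Ideal.mem_sup_right h1) (Or.inr (Ideal.mem_sup_left h3))
    · exact half_mem _ _ (Ideal.mem_sup_right h2) (Ideal.mem_sup_left h3)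
    · exact absurd rfl hij
  have hi0 : i ≠ 0 := by
    rcases hi with h | h | h <;> simp_all
  have hbase : Ideal.span {Xv m 0, Xv m 1, Yv m 0, Zv m 0} ⊔ FId m ≤ S :=
    le_trans (le_trans (base_le_Jd m i hi) (Jd_le_Idl m i hi0)) le_sup_left
  have key : Idl m 0 ≤ S.radical := main_radical m hm S hbase hyz.1 hyz.2
  refine ⟨?_, key⟩
  intro p hp
  exact zl_anti m key (zl_inter_sup m (Idl m i) (Idl m j) hp)

end
end

section
/- Let m ≥ 5. In the family { Z_m^i ∩ Z_m^j : i, j ∈ {0,1,2,3}, i ≠ j } of pairwise intersections of the subvarieties Z_m^0, Z_m^1, Z_m^2, Z_m^3 of ℂ^{3(m+1)}, the maximal elements with respect to inclusion are exactly Z_m^0 ∩ Z_m^1, Z_m^0 ∩ Z_m^2 and Z_m^0 ∩ Z_m^3, and these three sets are pairwise distinct. -/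
noncomputable section

open MvPolynomial

/- STATEMENT 19: for `m ≥ 5`, in the family
`{ Z_m^i ∩ Z_m^j : i, j ∈ {0,1,2,3}, i ≠ j }` the maximal elements with respect to
inclusion are exactly `Z_m^0 ∩ Z_m^1`, `Z_m^0 ∩ Z_m^2` and `Z_m^0 ∩ Z_m^3`,
and these three sets are pairwise distinct. -/

lemma xSer_coeff (m i : ℕ) : (xSer m).coeff i = Xv m i := by
  rw [xSer, Polynomial.finset_sum_coeff]
  simp only [Polynomial.coeff_C_mul, Polynomial.coeff_X_pow, mul_ite, mul_one, mul_zero]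
  rw [Finset.sum_ite_eq (Finset.range (m+1)) i (fun k => Xv m k)]
  by_cases h : i < m + 1
  · simp [h]
  · simp [h, Xv]

lemma ySer_coeff (m i : ℕ) : (ySer m).coeff i = Yv m i := by
  rw [ySer, Polynomial.finset_sum_coeff]
  simp only [Polynomial.coeff_C_mul, Polynomial.coeff_X_pow, mul_ite, mul_one, mul_zero]
  rw [Finset.sum_ite_eq (Finset.range (m+1)) i (fun k => Yv m k)]
  by_cases h : i < m + 1
  · simp [h]
  · simp [h, Yv]

lemma zSer_coeff (m i : ℕ) : (zSer m).coeff i = Zv m i := by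
  rw [zSer, Polynomial.finset_sum_coeff]
  simp only [Polynomial.coeff_C_mul, Polynomial.coeff_X_pow, mul_ite, mul_one, mul_zero]
  rw [Finset.sum_ite_eq (Finset.range (m+1)) i (fun k => Zv m k)]
  by_cases h : i < m + 1
  · simp [h]
  · simp [h, Zv]

lemma coeff_mul' {A : Type*} [CommRing A] (p q : Polynomial A) (n : ℕ) :
    (p*q).coeff n = ∑ i ∈ Finset.range (n+1), p.coeff i * q.coeff (n-i) := by
  rw [Polynomial.coeff_mul, Finset.Nat.sum_antidiagonal_eq_sum_range_succ_mk]


lemma fD4_eq (m : ℕ) (hm : 5 ≤ m) : fD m 4 =  (3)*(Zv m 1)^2*(Zv m 2) + (3)*(Zv m 0)*(Zv m 2)^2 + (6)*(Zv m 0)*(Zv m 1)*(Zv m 3) + (3)*(Zv m 0)^2*(Zv m 4) + (-1)*(Yv m 2)^2*(Zv m 0) + (-2)*(Yv m 1)*(Yv m 3)*(Zv m 0) + (-2)*(Yv m 1)*(Yv m 2)*(Zv m 1) + (-1)*(Yv m 1)^2*(Zv m 2) + (-2)*(Yv m 0)*(Yv m 4)*(Zv m 0) + (-2)*(Yv m 0)*(Yv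 m 3)*(Zv m 1) + (-2)*(Yv m 0)*(Yv m 2)*(Zv m 2) + (-2)*(Yv m 0)*(Yv m 1)*(Zv m 3) + (-1)*(Yv m 0)^2*(Zv m 4) + (Xv m 2)^2 + (2)*(Xv m 1)*(Xv m 3) + (2)*(Xv m 0)*(Xv m 4) := by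
  rw [fD, show ySer m ^ 2 * zSer m = ySer m * ySer m * zSer m from by ring,
    show zSer m ^ 3 = zSer m * zSer m * zSer m from by ring, pow_two]
  simp only [Polynomial.coeff_sub, Polynomial.coeff_add, coeff_mul',
    Finset.sum_range_succ, Finset.sum_range_zero]
  norm_num [xSer_coeff, ySer_coeff, zSer_coeff]
  ring

lemma fD5_eq (m : ℕ) (hm : 5 ≤ m) : fD m 5 =  (3)*(Zv m 1)*(Zv m 2)^2 + (3)*(Zv m 1)^2*(Zv m 3) + (6)*(Zv m 0)*(Zv m 2)*(Zv m 3) + (6)*(Zv m 0)*(Zv m 1)*(Zv m 4) + (3)*(Zv m 0)^2*(Zv m 5) + (-2)*(Yv m 2)*(Yv m 3)*(Zv m 0) + (-1)*(Yv m 2)^2*(Zv m 1) + (-2)*(Yv m 1)*(Yv m 4)*(Zv m 0) + (-2)*(Yv m 1)*(Yv m 3)*(Zv m 1) + (-2)*(Yv m 1)*(Yv m 2)*(Zv m 2) + (-1)*(Yv m 1)^2*(Zv m 3) + (-2)*(Yv m 0)*(Yv m 5)*(Zv m 0) + (-2)*(Yv m 0)*(Yv m 4)*(Zv m 1) + (-2)*(Yv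 m 0)*(Yv m 3)*(Zv m 2) + (-2)*(Yv m 0)*(Yv m 2)*(Zv m 3) + (-2)*(Yv m 0)*(Yv m 1)*(Zv m 4) + (-1)*(Yv m 0)^2*(Zv m 5) + (2)*(Xv m 2)*(Xv m 3) + (2)*(Xv m 1)*(Xv m 4) + (2)*(Xv m 0)*(Xv m 5) := by
  rw [fD, show ySer m ^ 2 * zSer m = ySer m * ySer m * zSer m from by ring,
    show zSer m ^ 3 = zSer m * zSer m * zSer m from by ring, pow_two]
  simp only [Polynomial.coeff_sub, Polynomial.coeff_add, coeff_mul',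
    Finset.sum_range_succ, Finset.sum_range_zero]
  norm_num [xSer_coeff, ySer_coeff, zSer_coeff]
  ring



lemma mem_zl_span {m : ℕ} (T : Set (R m)) (p : Pt m) :
    p ∈ zl m (Ideal.span T) ↔ ∀ g ∈ T, eval p g = 0 := by
  constructor
  · intro h g hg; exact h g (Ideal.subset_span hg)
  · intro h g hg
    have : Ideal.span T ≤ RingHom.ker (eval p) := Ideal.span_le.mpr h
    exact this hg

lemma mem_zl_sup {m : ℕ} {I J : Ideal (R m)} {p : Pt m} :
    p ∈ zl m (I ⊔ J) ↔ p ∈ zl m I ∧ p ∈ zl m J := by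
  constructor
  · intro h; exact ⟨fun g hg => h g (Ideal.mem_sup_left hg), fun g hg => h g (Ideal.mem_sup_right hg)⟩
  · rintro ⟨h1, h2⟩ g hg
    rcases Submodule.mem_sup.mp hg with ⟨a, ha, b, hb, rfl⟩
    rw [map_add, h1 a ha, h2 b hb, add_zero]

lemma fD_apply {m : ℕ} {A : Type*} [CommRing A] (φ : R m →+* A) (j : ℕ) :
    φ (fD m j) =
      ((∑ i ∈ Finset.range (m+1), Polynomial.C (φ (Xv m i)) * Polynomial.X ^ i)^2
      - (∑ i ∈ Finset.range (m+1), Polynomial.C (φ (Yv m i)) * Polynomial.X ^ i)^2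
        * (∑ i ∈ Finset.range (m+1), Polynomial.C (φ (Zv m i)) * Polynomial.X ^ i)
      + (∑ i ∈ Finset.range (m+1), Polynomial.C (φ (Zv m i)) * Polynomial.X ^ i)^3).coeff j := by
  rw [fD, ← Polynomial.coeff_map]
  congr 1
  simp only [Polynomial.map_sub, Polynomial.map_add, Polynomial.map_pow, Polynomial.map_mul,
    xSer, ySer, zSer, Polynomial.map_sum, Polynomial.map_C, Polynomial.map_X]


lemma fD_zero {m : ℕ} {A : Type*} [CommRing A] (φ : R m →+* A) (q : A) (hq : q^3 = q)
    (hx : ∀ i, φ (Xv m i) = 0) (hz : ∀ i, φ (Zv m i) = q * φ (Yv m i)) (j : ℕ) :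
    φ (fD m j) = 0 := by
  rw [fD_apply]
  set Y : Polynomial A := ∑ i ∈ Finset.range (m+1), Polynomial.C (φ (Yv m i)) * Polynomial.X ^ i with hY
  have hxs : (∑ i ∈ Finset.range (m+1), Polynomial.C (φ (Xv m i)) * Polynomial.X ^ i) = 0 := by
    simp [hx]
  have hzs : (∑ i ∈ Finset.range (m+1), Polynomial.C (φ (Zv m i)) * Polynomial.X ^ i)
      = Polynomial.C q * Y := by
    rw [hY, Finset.mul_sum]
    refine Finset.sum_congr rfl (fun i _ => ?_)
    rw [hz i, map_mul, mul_assoc]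
  rw [hxs, hzs]
  have : (0:Polynomial A)^2 - Y^2 * (Polynomial.C q * Y) + (Polynomial.C q * Y)^3
      = ((Polynomial.C q)^3 - Polynomial.C q) * Y^3 := by ring
  rw [this, ← map_pow, hq, sub_self, zero_mul, Polynomial.coeff_zero]

lemma mem_contrAway_of {m : ℕ} {J : Ideal (R m)} {g : R m} (n : ℕ)
    (h : (Yv m 1)^n * g ∈ J) : g ∈ contrAway m (Yv m 1) J := by
  rw [contrAway, Ideal.mem_comap]
  have h1 : algebraMap (R m) (Localization.Away (Yv m 1)) ((Yv m 1)^n * g)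
      ∈ J.map (algebraMap (R m) (Localization.Away (Yv m 1))) := Ideal.mem_map_of_mem _ h
  rw [map_mul, map_pow] at h1
  obtain ⟨u, hu⟩ : IsUnit (algebraMap (R m) (Localization.Away (Yv m 1)) (Yv m 1)) :=
    IsLocalization.map_units _ ⟨Yv m 1, Submonoid.mem_powers _⟩
  have : algebraMap (R m) (Localization.Away (Yv m 1)) g
      = ((u⁻¹ : (Localization.Away (Yv m 1))ˣ) : Localization.Away (Yv m 1))^n
        * ((algebraMap (R m) (Localization.Away (Yv m 1)) (Yv m 1))^n
          * algebraMap (R m) (Localization.Away (Yv m 1)) g) := by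
    rw [← hu, ← mul_assoc, ← mul_pow]
    simp
  rw [this]
  exact Ideal.mul_mem_left _ _ h1

lemma contrAway_vanish {m : ℕ} {J : Ideal (R m)} {A : Type*} [CommRing A] [IsDomain A]
    (φ : R m →+* A) (hJ : ∀ g ∈ J, φ g = 0) (hy : Yv m 1 ≠ 0) (hs : φ (Yv m 1) ≠ 0) {g : R m}
    (hg : g ∈ contrAway m (Yv m 1) J) : φ g = 0 := by
  rw [contrAway, Ideal.mem_comap,
    IsLocalization.mem_map_algebraMap_iff (Submonoid.powers (Yv m 1))] at hg
  obtain ⟨⟨j, t⟩, ht⟩ := hg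
  obtain ⟨k, hk⟩ := t.2
  have hinj : Function.Injective (algebraMap (R m) (Localization.Away (Yv m 1))) :=
    IsLocalization.injective _ (powers_le_nonZeroDivisors_of_noZeroDivisors hy)
  have hgt : g * (t : R m) = j := hinj (by rw [map_mul]; exact ht)
  have h0 : φ g * φ (t : R m) = 0 := by rw [← map_mul, hgt]; exact hJ j j.2
  rcases mul_eq_zero.mp h0 with h | h
  · exact h
  · exfalso; apply hs
    have : φ ((Yv m 1)^k) = 0 := by simp only [hk]; exact h
    rw [map_pow] at this
    exact (pow_eq_zero_iff'.mp this).1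

/-- witness point: x = 0, y = t², z = q t². -/
def ptq (m : ℕ) (q : ℂ) : Pt m := fun v =>
  if v.1 = 1 then (if (v.2:ℕ) = 2 then 1 else 0)
  else if v.1 = 2 then (if (v.2:ℕ) = 2 then q else 0) else 0

/-- witness curve: x = 0, y = εt + t², z = q(εt + t²). -/
def cvq (m : ℕ) (q : ℂ) : Fin 3 × Fin (m+1) → Polynomial ℂ := fun v =>
  if v.1 = 1 then (if (v.2:ℕ) = 1 then Polynomial.X else if (v.2:ℕ) = 2 then 1 else 0)
  else if v.1 = 2 then
    Polynomial.C q * (if (v.2:ℕ) = 1 then Polynomial.X else if (v.2:ℕ) = 2 then 1 else 0)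
  else 0

/-- the curve specializes to the point at ε = 0. -/
lemma cvq_spec (m : ℕ) (q : ℂ) :
    (Polynomial.evalRingHom (0:ℂ)).comp (eval₂Hom Polynomial.C (cvq m q)) = eval (ptq m q) := by
  apply MvPolynomial.ringHom_ext
  · intro a; simp
  · rintro ⟨k, i⟩
    fin_cases k <;> by_cases h1 : (i:ℕ) = 1 <;> by_cases h2 : (i:ℕ) = 2 <;>
      simp [cvq, ptq, h1, h2]

lemma pt_eval_Xv (m : ℕ) (q : ℂ) (i : ℕ) : eval (ptq m q) (Xv m i) = 0 := by
  unfold Xv; split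
  · simp [ptq]
  · simp

lemma pt_eval_Yv (m : ℕ) (hm : 5 ≤ m) (q : ℂ) (i : ℕ) :
    eval (ptq m q) (Yv m i) = if i = 2 then 1 else 0 := by
  unfold Yv; split
  · simp [ptq]
  · rename_i h; rw [if_neg (by omega)]; simp

lemma pt_eval_Zv (m : ℕ) (hm : 5 ≤ m) (q : ℂ) (i : ℕ) :
    eval (ptq m q) (Zv m i) = if i = 2 then q else 0 := by
  unfold Zv; split
  · simp [ptq]
  · rename_i h; rw [if_neg (by omega)]; simp

lemma cv_eval_Xv (m : ℕ) (q : ℂ) (i : ℕ) :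
    eval₂Hom Polynomial.C (cvq m q) (Xv m i) = 0 := by
  unfold Xv; split
  · simp [cvq]
  · simp

lemma cv_eval_Yv (m : ℕ) (hm : 5 ≤ m) (q : ℂ) (i : ℕ) :
    eval₂Hom Polynomial.C (cvq m q) (Yv m i)
      = if i = 1 then Polynomial.X else if i = 2 then 1 else 0 := by
  unfold Yv; split
  · simp [cvq]
  · rename_i h; rw [if_neg (by omega), if_neg (by omega)]; simp

lemma cv_eval_Zv (m : ℕ) (hm : 5 ≤ m) (q : ℂ) (i : ℕ) :
    eval₂Hom Polynomial.C (cvq m q) (Zv m i)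
      = Polynomial.C q * eval₂Hom Polynomial.C (cvq m q) (Yv m i) := by
  rw [cv_eval_Yv m hm]
  unfold Zv; split
  · simp [cvq]
  · rename_i h; rw [if_neg (by omega), if_neg (by omega)]; simp



lemma cv_eval_Xv' (m : ℕ) (q : ℂ) (i : ℕ) :
    eval₂ Polynomial.C (cvq m q) (Xv m i) = 0 := cv_eval_Xv m q i

lemma cv_eval_Yv' (m : ℕ) (hm : 5 ≤ m) (q : ℂ) (i : ℕ) :
    eval₂ Polynomial.C (cvq m q) (Yv m i)
      = if i = 1 then Polynomial.X else if i = 2 then 1 else 0 := cv_eval_Yv m hm q i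

lemma cv_eval_Zv' (m : ℕ) (hm : 5 ≤ m) (q : ℂ) (i : ℕ) :
    eval₂ Polynomial.C (cvq m q) (Zv m i)
      = Polynomial.C q * eval₂ Polynomial.C (cvq m q) (Yv m i) := cv_eval_Zv m hm q i

lemma curve_kills_FId (m : ℕ) (hm : 5 ≤ m) (q : ℂ) (hq : q^3 = q) :
    ∀ g ∈ {g | ∃ j ≤ m, g = fD m j}, eval₂Hom Polynomial.C (cvq m q) g = 0 := by
  rintro g ⟨j, hj, rfl⟩
  exact fD_zero _ (Polynomial.C q) (by rw [← map_pow, hq]) (cv_eval_Xv m q)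
    (cv_eval_Zv m hm q) j

lemma pt_kills_FId (m : ℕ) (hm : 5 ≤ m) (q : ℂ) (hq : q^3 = q) :
    ∀ g ∈ {g | ∃ j ≤ m, g = fD m j}, eval (ptq m q) g = 0 := by
  rintro g ⟨j, hj, rfl⟩
  refine fD_zero _ q hq (pt_eval_Xv m q) (fun i => ?_) j
  rw [pt_eval_Zv m hm, pt_eval_Yv m hm]
  split_ifs <;> simp

lemma pt_mem_Z0 (m : ℕ) (hm : 5 ≤ m) (q : ℂ) (hq : q^3 = q) : ptq m q ∈ Zd m 0 := by
  show ptq m q ∈ zl m (Idl m 0)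
  rw [Idl, if_pos rfl, I0]
  rw [mem_zl_sup]
  constructor
  · rw [mem_zl_span]
    intro g hg
    simp only [Set.mem_insert_iff, Set.mem_singleton_iff] at hg
    rcases hg with rfl|rfl|rfl|rfl|rfl|rfl|rfl <;>
      simp [pt_eval_Xv, pt_eval_Yv m hm, pt_eval_Zv m hm]
  · rw [FId, mem_zl_span]
    exact pt_kills_FId m hm q hq

lemma Yv_one_ne_zero (m : ℕ) (hm : 5 ≤ m) : Yv m 1 ≠ 0 := by
  rw [Yv, dif_pos (by omega)]
  exact MvPolynomial.X_ne_zero _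

lemma pt_mem_Za (m : ℕ) (hm : 5 ≤ m) (a : ℕ) (q : ℂ)
    (hJ : ∀ g ∈ Jd m a, eval₂Hom Polynomial.C (cvq m q) g = 0) (ha : a ≠ 0) :
    ptq m q ∈ Zd m a := by
  show ptq m q ∈ zl m (Idl m a)
  rw [Idl, if_neg ha]
  intro g hg
  have h0 : eval₂Hom Polynomial.C (cvq m q) g = 0 := by
    refine contrAway_vanish _ hJ (Yv_one_ne_zero m hm) ?_ hg
    rw [cv_eval_Yv m hm, if_pos rfl]
    exact Polynomial.X_ne_zero
  have := congrFun (congrArg DFunLike.coe (cvq_spec m q)) g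
  simp only [RingHom.comp_apply] at this
  rw [← this, h0, map_zero]

lemma Zd_sub_zlJ (m : ℕ) (a : ℕ) (ha : a ≠ 0) : Zd m a ⊆ zl m (Jd m a) := by
  intro p hp g hg
  exact hp g (by rw [Idl, if_neg ha]; exact Ideal.le_comap_map hg)



lemma mem_Z0_of (m : ℕ) (hm : 5 ≤ m) (p : Pt m)
    (hx0 : eval p (Xv m 0) = 0) (hx1 : eval p (Xv m 1) = 0)
    (hy0 : eval p (Yv m 0) = 0) (hz0 : eval p (Zv m 0) = 0)
    (hy1 : eval p (Yv m 1) = 0) (hz1 : eval p (Zv m 1) = 0)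
    (hf : ∀ g ∈ {g | ∃ j ≤ m, g = fD m j}, eval p g = 0) : p ∈ Zd m 0 := by
  have hx2 : eval p (Xv m 2) = 0 := by
    have h4 := hf (fD m 4) ⟨4, by omega, rfl⟩
    rw [fD4_eq m hm] at h4
    simp only [map_add, map_mul, map_pow, map_neg, map_one, map_ofNat, hx0, hx1, hy0, hz0,
      hy1, hz1, mul_zero, zero_mul, add_zero, zero_add, mul_one, one_mul, neg_zero,
      zero_pow, ne_eq, OfNat.ofNat_ne_zero, not_false_eq_true] at h4
    exact pow_eq_zero_iff (by norm_num) |>.mp h4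
  show p ∈ zl m (Idl m 0)
  rw [Idl, if_pos rfl, I0, mem_zl_sup]
  refine ⟨?_, by rw [FId, mem_zl_span]; exact hf⟩
  rw [mem_zl_span]
  intro g hg
  simp only [Set.mem_insert_iff, Set.mem_singleton_iff] at hg
  rcases hg with rfl|rfl|rfl|rfl|rfl|rfl|rfl <;> assumption

lemma evalJ (m : ℕ) {a : ℕ} (ha : a ≠ 0) {p : Pt m} (hp : p ∈ Zd m a) :
    ∀ g ∈ Jd m a, eval p g = 0 := fun g hg => Zd_sub_zlJ m a ha hp g hg

lemma gen_mem_Jd (m : ℕ) (a : ℕ) (g : R m)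
    (hg : g ∈ ({Xv m 0, Xv m 1, Yv m 0, Zv m 0, Zv m 1} : Set (R m)) ∧ (a = 1) ∨
      g ∈ ({Xv m 0, Xv m 1, Yv m 0, Zv m 0, Yv m 1 - Zv m 1} : Set (R m)) ∧ (a = 2) ∨
      g ∈ ({Xv m 0, Xv m 1, Yv m 0, Zv m 0, Yv m 1 + Zv m 1} : Set (R m)) ∧ (a = 3)) :
    g ∈ Jd m a := by
  rcases hg with ⟨hg, rfl⟩|⟨hg, rfl⟩|⟨hg, rfl⟩ <;>
    exact Ideal.mem_sup_left (Ideal.subset_span hg)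

lemma fD_mem_Jd (m : ℕ) (a j : ℕ) (hj : j ≤ m) : fD m j ∈ Jd m a := by
  have h : fD m j ∈ FId m := Ideal.subset_span ⟨j, hj, rfl⟩
  match a with
  | 0 => exact Ideal.mem_sup_right h
  | 1 => exact Ideal.mem_sup_right h
  | 2 => exact Ideal.mem_sup_right h
  | 3 => exact Ideal.mem_sup_right h
  | (n+4) => exact Ideal.mem_sup_right h



lemma Jd_one (m : ℕ) :
    Jd m 1 = Ideal.span {Xv m 0, Xv m 1, Yv m 0, Zv m 0, Zv m 1} ⊔ FId m := rfl
lemma Jd_two (m : ℕ) :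
    Jd m 2 = Ideal.span {Xv m 0, Xv m 1, Yv m 0, Zv m 0, Yv m 1 - Zv m 1} ⊔ FId m := rfl
lemma Jd_three (m : ℕ) :
    Jd m 3 = Ideal.span {Xv m 0, Xv m 1, Yv m 0, Zv m 0, Yv m 1 + Zv m 1} ⊔ FId m := rfl

lemma Z12_sub (m : ℕ) (hm : 5 ≤ m) : Zd m 1 ∩ Zd m 2 ⊆ Zd m 0 := by
  rintro p ⟨h1, h2⟩
  have e1 := evalJ m (by norm_num : (1:ℕ) ≠ 0) h1
  have e2 := evalJ m (by norm_num : (2:ℕ) ≠ 0) h2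
  have hz1 : eval p (Zv m 1) = 0 :=
    e1 _ (gen_mem_Jd m 1 _ (Or.inl ⟨by simp, rfl⟩))
  have hy1 : eval p (Yv m 1) = 0 := by
    have := e2 (Yv m 1 - Zv m 1) (gen_mem_Jd m 2 (Yv m 1 - Zv m 1) (Or.inr (Or.inl ⟨by simp, rfl⟩)))
    rw [map_sub, hz1, sub_zero] at this
    exact this
  refine mem_Z0_of m hm p ?_ ?_ ?_ ?_ hy1 hz1 ?_
  · exact e1 _ (gen_mem_Jd m 1 _ (Or.inl ⟨by simp, rfl⟩))
  · exact e1 _ (gen_mem_Jd m 1 _ (Or.inl ⟨by simp, rfl⟩))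
  · exact e1 _ (gen_mem_Jd m 1 _ (Or.inl ⟨by simp, rfl⟩))
  · exact e1 _ (gen_mem_Jd m 1 _ (Or.inl ⟨by simp, rfl⟩))
  · rintro g ⟨j, hj, rfl⟩
    exact e1 _ (fD_mem_Jd m 1 j hj)

lemma Z13_sub (m : ℕ) (hm : 5 ≤ m) : Zd m 1 ∩ Zd m 3 ⊆ Zd m 0 := by
  rintro p ⟨h1, h3⟩
  have e1 := evalJ m (by norm_num : (1:ℕ) ≠ 0) h1
  have e3 := evalJ m (by norm_num : (3:ℕ) ≠ 0) h3
  have hz1 : eval p (Zv m 1) = 0 :=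
    e1 _ (gen_mem_Jd m 1 _ (Or.inl ⟨by simp, rfl⟩))
  have hy1 : eval p (Yv m 1) = 0 := by
    have := e3 (Yv m 1 + Zv m 1) (gen_mem_Jd m 3 (Yv m 1 + Zv m 1) (Or.inr (Or.inr ⟨by simp, rfl⟩)))
    rw [map_add, hz1, add_zero] at this
    exact this
  refine mem_Z0_of m hm p ?_ ?_ ?_ ?_ hy1 hz1 ?_
  · exact e1 _ (gen_mem_Jd m 1 _ (Or.inl ⟨by simp, rfl⟩))
  · exact e1 _ (gen_mem_Jd m 1 _ (Or.inl ⟨by simp, rfl⟩))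
  · exact e1 _ (gen_mem_Jd m 1 _ (Or.inl ⟨by simp, rfl⟩))
  · exact e1 _ (gen_mem_Jd m 1 _ (Or.inl ⟨by simp, rfl⟩))
  · rintro g ⟨j, hj, rfl⟩
    exact e1 _ (fD_mem_Jd m 1 j hj)

lemma Z23_sub (m : ℕ) (hm : 5 ≤ m) : Zd m 2 ∩ Zd m 3 ⊆ Zd m 0 := by
  rintro p ⟨h2, h3⟩
  have e2 := evalJ m (by norm_num : (2:ℕ) ≠ 0) h2
  have e3 := evalJ m (by norm_num : (3:ℕ) ≠ 0) h3
  have hsub : eval p (Yv m 1) - eval p (Zv m 1) = 0 := by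
    have := e2 (Yv m 1 - Zv m 1) (gen_mem_Jd m 2 (Yv m 1 - Zv m 1) (Or.inr (Or.inl ⟨by simp, rfl⟩)))
    rwa [map_sub] at this
  have hadd : eval p (Yv m 1) + eval p (Zv m 1) = 0 := by
    have := e3 (Yv m 1 + Zv m 1) (gen_mem_Jd m 3 (Yv m 1 + Zv m 1) (Or.inr (Or.inr ⟨by simp, rfl⟩)))
    rwa [map_add] at this
  have hy1 : eval p (Yv m 1) = 0 := by linear_combination (hsub + hadd) / 2
  have hz1 : eval p (Zv m 1) = 0 := by linear_combination (hadd - hsub) / 2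
  refine mem_Z0_of m hm p ?_ ?_ ?_ ?_ hy1 hz1 ?_
  · exact e2 _ (gen_mem_Jd m 2 _ (Or.inr (Or.inl ⟨by simp, rfl⟩)))
  · exact e2 _ (gen_mem_Jd m 2 _ (Or.inr (Or.inl ⟨by simp, rfl⟩)))
  · exact e2 _ (gen_mem_Jd m 2 _ (Or.inr (Or.inl ⟨by simp, rfl⟩)))
  · exact e2 _ (gen_mem_Jd m 2 _ (Or.inr (Or.inl ⟨by simp, rfl⟩)))
  · rintro g ⟨j, hj, rfl⟩
    exact e2 _ (fD_mem_Jd m 2 j hj)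



lemma pt_mem_Z1 (m : ℕ) (hm : 5 ≤ m) : ptq m 0 ∈ Zd m 1 := by
  refine pt_mem_Za m hm 1 0 ?_ (by norm_num)
  rw [Jd_one]
  intro g hg
  rcases Submodule.mem_sup.mp hg with ⟨u, hu, v, hv, rfl⟩
  rw [map_add]
  have h1 : eval₂Hom Polynomial.C (cvq m 0) u = 0 := by
    have : Ideal.span ({Xv m 0, Xv m 1, Yv m 0, Zv m 0, Zv m 1} : Set (R m))
        ≤ RingHom.ker (eval₂Hom Polynomial.C (cvq m 0)) := by
      rw [Ideal.span_le]
      intro g hg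
      simp only [Set.mem_insert_iff, Set.mem_singleton_iff] at hg
      rcases hg with rfl|rfl|rfl|rfl|rfl <;>
        simp [RingHom.mem_ker, cv_eval_Xv, cv_eval_Yv m hm, cv_eval_Zv m hm, cv_eval_Xv', cv_eval_Yv' m hm, cv_eval_Zv' m hm]
    exact this hu
  have h2 : eval₂Hom Polynomial.C (cvq m 0) v = 0 := by
    have : FId m ≤ RingHom.ker (eval₂Hom Polynomial.C (cvq m 0)) := by
      rw [FId, Ideal.span_le]
      intro g hg
      exact curve_kills_FId m hm 0 (by norm_num) g hg
    exact this hv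
  rw [h1, h2, add_zero]

lemma pt_mem_Z2 (m : ℕ) (hm : 5 ≤ m) : ptq m 1 ∈ Zd m 2 := by
  refine pt_mem_Za m hm 2 1 ?_ (by norm_num)
  rw [Jd_two]
  intro g hg
  rcases Submodule.mem_sup.mp hg with ⟨u, hu, v, hv, rfl⟩
  rw [map_add]
  have h1 : eval₂Hom Polynomial.C (cvq m 1) u = 0 := by
    have : Ideal.span ({Xv m 0, Xv m 1, Yv m 0, Zv m 0, Yv m 1 - Zv m 1} : Set (R m))
        ≤ RingHom.ker (eval₂Hom Polynomial.C (cvq m 1)) := by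
      rw [Ideal.span_le]
      intro g hg
      simp only [Set.mem_insert_iff, Set.mem_singleton_iff] at hg
      rcases hg with rfl|rfl|rfl|rfl|rfl <;>
        simp [RingHom.mem_ker, cv_eval_Xv, cv_eval_Yv m hm, cv_eval_Zv m hm, cv_eval_Xv', cv_eval_Yv' m hm, cv_eval_Zv' m hm]
    exact this hu
  have h2 : eval₂Hom Polynomial.C (cvq m 1) v = 0 := by
    have : FId m ≤ RingHom.ker (eval₂Hom Polynomial.C (cvq m 1)) := by
      rw [FId, Ideal.span_le]
      intro g hg
      exact curve_kills_FId m hm 1 (by norm_num) g hg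
    exact this hv
  rw [h1, h2, add_zero]

lemma pt_mem_Z3 (m : ℕ) (hm : 5 ≤ m) : ptq m (-1) ∈ Zd m 3 := by
  refine pt_mem_Za m hm 3 (-1) ?_ (by norm_num)
  rw [Jd_three]
  intro g hg
  rcases Submodule.mem_sup.mp hg with ⟨u, hu, v, hv, rfl⟩
  rw [map_add]
  have h1 : eval₂Hom Polynomial.C (cvq m (-1)) u = 0 := by
    have : Ideal.span ({Xv m 0, Xv m 1, Yv m 0, Zv m 0, Yv m 1 + Zv m 1} : Set (R m))
        ≤ RingHom.ker (eval₂Hom Polynomial.C (cvq m (-1))) := by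
      rw [Ideal.span_le]
      intro g hg
      simp only [Set.mem_insert_iff, Set.mem_singleton_iff] at hg
      rcases hg with rfl|rfl|rfl|rfl|rfl <;>
        simp [RingHom.mem_ker, cv_eval_Xv, cv_eval_Yv m hm, cv_eval_Zv m hm, cv_eval_Xv', cv_eval_Yv' m hm, cv_eval_Zv' m hm]
    exact this hu
  have h2 : eval₂Hom Polynomial.C (cvq m (-1)) v = 0 := by
    have : FId m ≤ RingHom.ker (eval₂Hom Polynomial.C (cvq m (-1))) := by
      rw [FId, Ideal.span_le]
      intro g hg
      exact curve_kills_FId m hm (-1) (by norm_num) g hg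
    exact this hv
  rw [h1, h2, add_zero]



lemma G4_mem_1 (m : ℕ) (hm : 5 ≤ m) : ((-1)*(Yv m 1)^2*(Zv m 2) + (Xv m 2)^2) ∈ Jd m 1 := by
  have h := fD_mem_Jd m 1 4 (by omega)
  rw [fD4_eq m hm] at h
  have key : ((-1)*(Yv m 1)^2*(Zv m 2) + (Xv m 2)^2) = ((3)*(Zv m 1)^2*(Zv m 2) + (3)*(Zv m 0)*(Zv m 2)^2 + (6)*(Zv m 0)*(Zv m 1)*(Zv m 3) + (3)*(Zv m 0)^2*(Zv m 4) + (-1)*(Yv m 2)^2*(Zv m 0) + (-2)*(Yv m 1)*(Yv m 3)*(Zv m 0) + (-2)*(Yv m 1)*(Yv m 2)*(Zv m 1) + (-1)*(Yv m 1)^2*(Zv m 2) + (-2)*(Yv m 0)*(Yv m 4)*(Zv m 0) + (-2)*(Yv m 0)*(Yv m 3)*(Zv m 1) + (-2)*(Yv m 0)*(Yv m 2)*(Zv m 2) + (-2)*(Yv m 0)*(Yv m 1)*(Zv m 3) + (-1)*(Yv m 0)^2*(Zv m 4) + (Xv m 2)^2 + (2)*(Xv m 1)*(Xv m 3) + (2)*(Xv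 m 0)*(Xv m 4))
      - (((2)*(Xv m 4)) * Xv m 0 + ((2)*(Xv m 3)) * Xv m 1 + ((-2)*(Yv m 4)*(Zv m 0) + (-2)*(Yv m 3)*(Zv m 1) + (-2)*(Yv m 2)*(Zv m 2) + (-2)*(Yv m 1)*(Zv m 3) + (-1)*(Yv m 0)*(Zv m 4)) * Yv m 0
        + ((3)*(Zv m 2)^2 + (6)*(Zv m 1)*(Zv m 3) + (3)*(Zv m 0)*(Zv m 4) + (-1)*(Yv m 2)^2 + (-2)*(Yv m 1)*(Yv m 3)) * Zv m 0 + ((3)*(Zv m 1)*(Zv m 2) + (-2)*(Yv m 1)*(Yv m 2)) * (Zv m 1)) := by ring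
  rw [key]
  refine Ideal.sub_mem _ h ?_
  refine Ideal.add_mem _ (Ideal.add_mem _ (Ideal.add_mem _ (Ideal.add_mem _ ?_ ?_) ?_) ?_) ?_
  · exact Ideal.mul_mem_left _ _ (gen_mem_Jd m 1 _ (Or.inl ⟨by simp, rfl⟩))
  · exact Ideal.mul_mem_left _ _ (gen_mem_Jd m 1 _ (Or.inl ⟨by simp, rfl⟩))
  · exact Ideal.mul_mem_left _ _ (gen_mem_Jd m 1 _ (Or.inl ⟨by simp, rfl⟩))
  · exact Ideal.mul_mem_left _ _ (gen_mem_Jd m 1 _ (Or.inl ⟨by simp, rfl⟩))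
  · exact Ideal.mul_mem_left _ _ (gen_mem_Jd m 1 _ (Or.inl ⟨by simp, rfl⟩))

lemma G5_mem_1 (m : ℕ) (hm : 5 ≤ m) : ((-2)*(Yv m 1)*(Yv m 2)*(Zv m 2) + (-1)*(Yv m 1)^2*(Zv m 3) + (2)*(Xv m 2)*(Xv m 3)) ∈ Jd m 1 := by
  have h := fD_mem_Jd m 1 5 (by omega)
  rw [fD5_eq m hm] at h
  have key : ((-2)*(Yv m 1)*(Yv m 2)*(Zv m 2) + (-1)*(Yv m 1)^2*(Zv m 3) + (2)*(Xv m 2)*(Xv m 3)) = ((3)*(Zv m 1)*(Zv m 2)^2 + (3)*(Zv m 1)^2*(Zv m 3) + (6)*(Zv m 0)*(Zv m 2)*(Zv m 3) + (6)*(Zv m 0)*(Zv m 1)*(Zv m 4) + (3)*(Zv m 0)^2*(Zv m 5) + (-2)*(Yv m 2)*(Yv m 3)*(Zv m 0) + (-1)*(Yv m 2)^2*(Zv m 1) + (-2)*(Yv m 1)*(Yv m 4)*(Zv m 0) + (-2)*(Yv m 1)*(Yv m 3)*(Zv m 1) + (-2)*(Yv m 1)*(Yv m 2)*(Zv m 2)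 + (-1)*(Yv m 1)^2*(Zv m 3) + (-2)*(Yv m 0)*(Yv m 5)*(Zv m 0) + (-2)*(Yv m 0)*(Yv m 4)*(Zv m 1) + (-2)*(Yv m 0)*(Yv m 3)*(Zv m 2) + (-2)*(Yv m 0)*(Yv m 2)*(Zv m 3) + (-2)*(Yv m 0)*(Yv m 1)*(Zv m 4) + (-1)*(Yv m 0)^2*(Zv m 5) + (2)*(Xv m 2)*(Xv m 3) + (2)*(Xv m 1)*(Xv m 4) + (2)*(Xv m 0)*(Xv m 5))
      - (((2)*(Xv m 5)) * Xv m 0 + ((2)*(Xv m 4)) * Xv m 1 + ((-2)*(Yv m 5)*(Zv m 0) + (-2)*(Yv m 4)*(Zv m 1) + (-2)*(Yv m 3)*(Zv m 2) + (-2)*(Yv m 2)*(Zv m 3) + (-2)*(Yv m 1)*(Zv m 4) + (-1)*(Yv m 0)*(Zv m 5)) * Yv m 0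
        + ((6)*(Zv m 2)*(Zv m 3) + (6)*(Zv m 1)*(Zv m 4) + (3)*(Zv m 0)*(Zv m 5) + (-2)*(Yv m 2)*(Yv m 3) + (-2)*(Yv m 1)*(Yv m 4)) * Zv m 0 + ((3)*(Zv m 2)^2 + (3)*(Zv m 1)*(Zv m 3) + (-1)*(Yv m 2)^2 + (-2)*(Yv m 1)*(Yv m 3)) * (Zv m 1)) := by ring
  rw [key]
  refine Ideal.sub_mem _ h ?_
  refine Ideal.add_mem _ (Ideal.add_mem _ (Ideal.add_mem _ (Ideal.add_mem _ ?_ ?_) ?_) ?_) ?_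
  · exact Ideal.mul_mem_left _ _ (gen_mem_Jd m 1 _ (Or.inl ⟨by simp, rfl⟩))
  · exact Ideal.mul_mem_left _ _ (gen_mem_Jd m 1 _ (Or.inl ⟨by simp, rfl⟩))
  · exact Ideal.mul_mem_left _ _ (gen_mem_Jd m 1 _ (Or.inl ⟨by simp, rfl⟩))
  · exact Ideal.mul_mem_left _ _ (gen_mem_Jd m 1 _ (Or.inl ⟨by simp, rfl⟩))
  · exact Ideal.mul_mem_left _ _ (gen_mem_Jd m 1 _ (Or.inl ⟨by simp, rfl⟩))

lemma sat_mem_1 (m : ℕ) (hm : 5 ≤ m) : ((4)*(Yv m 2)^2*(Zv m 2)^2 + (4)*(Yv m 1)*(Yv m 2)*(Zv m 2)*(Zv m 3) + (Yv m 1)^2*(Zv m 3)^2 + (-4)*(Xv m 3)^2*(Zv m 2)) ∈ Idl m 1 := by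
  rw [Idl, if_neg (by norm_num)]
  apply mem_contrAway_of 2
  have key : (Yv m 1)^2 * ((4)*(Yv m 2)^2*(Zv m 2)^2 + (4)*(Yv m 1)*(Yv m 2)*(Zv m 2)*(Zv m 3) + (Yv m 1)^2*(Zv m 3)^2 + (-4)*(Xv m 3)^2*(Zv m 2))
      = (4*(Xv m 3)^2) * ((-1)*(Yv m 1)^2*(Zv m 2) + (Xv m 2)^2) + (((-2)*(Yv m 1)*(Yv m 2)*(Zv m 2) + (-1)*(Yv m 1)^2*(Zv m 3) + (2)*(Xv m 2)*(Xv m 3)) - 4*(Xv m 2)*(Xv m 3)) * ((-2)*(Yv m 1)*(Yv m 2)*(Zv m 2) + (-1)*(Yv m 1)^2*(Zv m 3) + (2)*(Xv m 2)*(Xv m 3)) := by ring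
  rw [key]
  exact Ideal.add_mem _ (Ideal.mul_mem_left _ _ (G4_mem_1 m hm))
    (Ideal.mul_mem_left _ _ (G5_mem_1 m hm))


lemma G4_mem_2 (m : ℕ) (hm : 5 ≤ m) : ((2)*(Yv m 1)^2*(Zv m 2) + (-2)*(Yv m 1)^2*(Yv m 2) + (Xv m 2)^2) ∈ Jd m 2 := by
  have h := fD_mem_Jd m 2 4 (by omega)
  rw [fD4_eq m hm] at h
  have key : ((2)*(Yv m 1)^2*(Zv m 2) + (-2)*(Yv m 1)^2*(Yv m 2) + (Xv m 2)^2) = ((3)*(Zv m 1)^2*(Zv m 2) + (3)*(Zv m 0)*(Zv m 2)^2 + (6)*(Zv m 0)*(Zv m 1)*(Zv m 3) + (3)*(Zv m 0)^2*(Zv m 4) + (-1)*(Yv m 2)^2*(Zv m 0) + (-2)*(Yv m 1)*(Yv m 3)*(Zv m 0) + (-2)*(Yv m 1)*(Yv m 2)*(Zv m 1) + (-1)*(Yv m 1)^2*(Zv m 2) + (-2)*(Yv m 0)*(Yv m 4)*(Zv m 0) + (-2)*(Yv m 0)*(Yv m 3)*(Zv m 1) + (-2)*(Yv m 0)*(Yv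 m 2)*(Zv m 2) + (-2)*(Yv m 0)*(Yv m 1)*(Zv m 3) + (-1)*(Yv m 0)^2*(Zv m 4) + (Xv m 2)^2 + (2)*(Xv m 1)*(Xv m 3) + (2)*(Xv m 0)*(Xv m 4))
      - (((2)*(Xv m 4)) * Xv m 0 + ((2)*(Xv m 3)) * Xv m 1 + ((-2)*(Yv m 4)*(Zv m 0) + (-2)*(Yv m 3)*(Zv m 1) + (-2)*(Yv m 2)*(Zv m 2) + (-2)*(Yv m 1)*(Zv m 3) + (-1)*(Yv m 0)*(Zv m 4)) * Yv m 0
        + ((3)*(Zv m 2)^2 + (6)*(Zv m 1)*(Zv m 3) + (3)*(Zv m 0)*(Zv m 4) + (-1)*(Yv m 2)^2 + (-2)*(Yv m 1)*(Yv m 3)) * Zv m 0 + ((-3)*(Zv m 1)*(Zv m 2) + (-3)*(Yv m 1)*(Zv m 2) + (2)*(Yv m 1)*(Yv m 2)) * (Yv m 1 - Zv m 1)) := by ring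
  rw [key]
  refine Ideal.sub_mem _ h ?_
  refine Ideal.add_mem _ (Ideal.add_mem _ (Ideal.add_mem _ (Ideal.add_mem _ ?_ ?_) ?_) ?_) ?_
  · exact Ideal.mul_mem_left _ _ (gen_mem_Jd m 2 _ (Or.inr (Or.inl ⟨by simp, rfl⟩)))
  · exact Ideal.mul_mem_left _ _ (gen_mem_Jd m 2 _ (Or.inr (Or.inl ⟨by simp, rfl⟩)))
  · exact Ideal.mul_mem_left _ _ (gen_mem_Jd m 2 _ (Or.inr (Or.inl ⟨by simp, rfl⟩)))
  · exact Ideal.mul_mem_left _ _ (gen_mem_Jd m 2 _ (Or.inr (Or.inl ⟨by simp, rfl⟩)))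
  · exact Ideal.mul_mem_left _ _ (gen_mem_Jd m 2 _ (Or.inr (Or.inl ⟨by simp, rfl⟩)))

lemma G5_mem_2 (m : ℕ) (hm : 5 ≤ m) : ((3)*(Yv m 1)*(Zv m 2)^2 + (-2)*(Yv m 1)*(Yv m 2)*(Zv m 2) + (-1)*(Yv m 1)*(Yv m 2)^2 + (2)*(Yv m 1)^2*(Zv m 3) + (-2)*(Yv m 1)^2*(Yv m 3) + (2)*(Xv m 2)*(Xv m 3)) ∈ Jd m 2 := by
  have h := fD_mem_Jd m 2 5 (by omega)
  rw [fD5_eq m hm] at h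
  have key : ((3)*(Yv m 1)*(Zv m 2)^2 + (-2)*(Yv m 1)*(Yv m 2)*(Zv m 2) + (-1)*(Yv m 1)*(Yv m 2)^2 + (2)*(Yv m 1)^2*(Zv m 3) + (-2)*(Yv m 1)^2*(Yv m 3) + (2)*(Xv m 2)*(Xv m 3)) = ((3)*(Zv m 1)*(Zv m 2)^2 + (3)*(Zv m 1)^2*(Zv m 3) + (6)*(Zv m 0)*(Zv m 2)*(Zv m 3) + (6)*(Zv m 0)*(Zv m 1)*(Zv m 4) + (3)*(Zv m 0)^2*(Zv m 5) + (-2)*(Yv m 2)*(Yv m 3)*(Zv m 0) + (-1)*(Yv m 2)^2*(Zv m 1) + (-2)*(Yv m 1)*(Yv m 4)*(Zv m 0) + (-2)*(Yv m 1)*(Yv m 3)*(Zv m 1) + (-2)*(Yv m 1)*(Yv m 2)*(Zv m 2) + (-1)*(Yv m 1)^2*(Zv m 3) + (-2)*(Yv m 0)*(Yv m 5)*(Zv m 0) + (-2)*(Yv m 0)*(Yv m 4)*(Zv m 1) + (-2)*(Yv m 0)*(Yv m 3)*(Zv m 2) + (-2)*(Yv m 0)*(Yv m 2)*(Zv m 3)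 + (-2)*(Yv m 0)*(Yv m 1)*(Zv m 4) + (-1)*(Yv m 0)^2*(Zv m 5) + (2)*(Xv m 2)*(Xv m 3) + (2)*(Xv m 1)*(Xv m 4) + (2)*(Xv m 0)*(Xv m 5))
      - (((2)*(Xv m 5)) * Xv m 0 + ((2)*(Xv m 4)) * Xv m 1 + ((-2)*(Yv m 5)*(Zv m 0) + (-2)*(Yv m 4)*(Zv m 1) + (-2)*(Yv m 3)*(Zv m 2) + (-2)*(Yv m 2)*(Zv m 3) + (-2)*(Yv m 1)*(Zv m 4) + (-1)*(Yv m 0)*(Zv m 5)) * Yv m 0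
        + ((6)*(Zv m 2)*(Zv m 3) + (6)*(Zv m 1)*(Zv m 4) + (3)*(Zv m 0)*(Zv m 5) + (-2)*(Yv m 2)*(Yv m 3) + (-2)*(Yv m 1)*(Yv m 4)) * Zv m 0 + ((-3)*(Zv m 2)^2 + (-3)*(Zv m 1)*(Zv m 3) + (Yv m 2)^2 + (-3)*(Yv m 1)*(Zv m 3) + (2)*(Yv m 1)*(Yv m 3)) * (Yv m 1 - Zv m 1)) := by ring
  rw [key]
  refine Ideal.sub_mem _ h ?_
  refine Ideal.add_mem _ (Ideal.add_mem _ (Ideal.add_mem _ (Ideal.add_mem _ ?_ ?_) ?_) ?_) ?_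
  · exact Ideal.mul_mem_left _ _ (gen_mem_Jd m 2 _ (Or.inr (Or.inl ⟨by simp, rfl⟩)))
  · exact Ideal.mul_mem_left _ _ (gen_mem_Jd m 2 _ (Or.inr (Or.inl ⟨by simp, rfl⟩)))
  · exact Ideal.mul_mem_left _ _ (gen_mem_Jd m 2 _ (Or.inr (Or.inl ⟨by simp, rfl⟩)))
  · exact Ideal.mul_mem_left _ _ (gen_mem_Jd m 2 _ (Or.inr (Or.inl ⟨by simp, rfl⟩)))
  · exact Ideal.mul_mem_left _ _ (gen_mem_Jd m 2 _ (Or.inr (Or.inl ⟨by simp, rfl⟩)))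

lemma sat_mem_2 (m : ℕ) (hm : 5 ≤ m) : ((9)*(Zv m 2)^4 + (-12)*(Yv m 2)*(Zv m 2)^3 + (-2)*(Yv m 2)^2*(Zv m 2)^2 + (4)*(Yv m 2)^3*(Zv m 2) + (Yv m 2)^4 + (12)*(Yv m 1)*(Zv m 2)^2*(Zv m 3) + (-12)*(Yv m 1)*(Yv m 3)*(Zv m 2)^2 + (-8)*(Yv m 1)*(Yv m 2)*(Zv m 2)*(Zv m 3) + (8)*(Yv m 1)*(Yv m 2)*(Yv m 3)*(Zv m 2) + (-4)*(Yv m 1)*(Yv m 2)^2*(Zv m 3) + (4)*(Yv m 1)*(Yv m 2)^2*(Yv m 3) + (4)*(Yv m 1)^2*(Zv m 3)^2 + (-8)*(Yv m 1)^2*(Yv m 3)*(Zv m 3) + (4)*(Yv m 1)^2*(Yv m 3)^2 + (8)*(Xv m 3)^2*(Zv m 2) + (-8)*(Xv m 3)^2*(Yv m 2)) ∈ Idl m 2 := by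
  rw [Idl, if_neg (by norm_num)]
  apply mem_contrAway_of 2
  have key : (Yv m 1)^2 * ((9)*(Zv m 2)^4 + (-12)*(Yv m 2)*(Zv m 2)^3 + (-2)*(Yv m 2)^2*(Zv m 2)^2 + (4)*(Yv m 2)^3*(Zv m 2) + (Yv m 2)^4 + (12)*(Yv m 1)*(Zv m 2)^2*(Zv m 3) + (-12)*(Yv m 1)*(Yv m 3)*(Zv m 2)^2 + (-8)*(Yv m 1)*(Yv m 2)*(Zv m 2)*(Zv m 3) + (8)*(Yv m 1)*(Yv m 2)*(Yv m 3)*(Zv m 2) + (-4)*(Yv m 1)*(Yv m 2)^2*(Zv m 3) + (4)*(Yv m 1)*(Yv m 2)^2*(Yv m 3) + (4)*(Yv m 1)^2*(Zv m 3)^2 + (-8)*(Yv m 1)^2*(Yv m 3)*(Zv m 3) + (4)*(Yv m 1)^2*(Yv m 3)^2 + (8)*(Xv m 3)^2*(Zv m 2) + (-8)*(Xv m 3)^2*(Yv m 2))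
      = (4*(Xv m 3)^2) * ((2)*(Yv m 1)^2*(Zv m 2) + (-2)*(Yv m 1)^2*(Yv m 2) + (Xv m 2)^2) + (((3)*(Yv m 1)*(Zv m 2)^2 + (-2)*(Yv m 1)*(Yv m 2)*(Zv m 2) + (-1)*(Yv m 1)*(Yv m 2)^2 + (2)*(Yv m 1)^2*(Zv m 3) + (-2)*(Yv m 1)^2*(Yv m 3) + (2)*(Xv m 2)*(Xv m 3)) - 4*(Xv m 2)*(Xv m 3)) * ((3)*(Yv m 1)*(Zv m 2)^2 + (-2)*(Yv m 1)*(Yv m 2)*(Zv m 2) + (-1)*(Yv m 1)*(Yv m 2)^2 + (2)*(Yv m 1)^2*(Zv m 3) + (-2)*(Yv m 1)^2*(Yv m 3) + (2)*(Xv m 2)*(Xv m 3)) := by ring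
  rw [key]
  exact Ideal.add_mem _ (Ideal.mul_mem_left _ _ (G4_mem_2 m hm))
    (Ideal.mul_mem_left _ _ (G5_mem_2 m hm))


lemma G4_mem_3 (m : ℕ) (hm : 5 ≤ m) : ((2)*(Yv m 1)^2*(Zv m 2) + (2)*(Yv m 1)^2*(Yv m 2) + (Xv m 2)^2) ∈ Jd m 3 := by
  have h := fD_mem_Jd m 3 4 (by omega)
  rw [fD4_eq m hm] at h
  have key : ((2)*(Yv m 1)^2*(Zv m 2) + (2)*(Yv m 1)^2*(Yv m 2) + (Xv m 2)^2) = ((3)*(Zv m 1)^2*(Zv m 2) + (3)*(Zv m 0)*(Zv m 2)^2 + (6)*(Zv m 0)*(Zv m 1)*(Zv m 3) + (3)*(Zv m 0)^2*(Zv m 4) + (-1)*(Yv m 2)^2*(Zv m 0) + (-2)*(Yv m 1)*(Yv m 3)*(Zv m 0) + (-2)*(Yv m 1)*(Yv m 2)*(Zv m 1) + (-1)*(Yv m 1)^2*(Zv m 2) + (-2)*(Yv m 0)*(Yv m 4)*(Zv m 0) + (-2)*(Yv m 0)*(Yv m 3)*(Zv m 1) + (-2)*(Yv m 0)*(Yv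 m 2)*(Zv m 2) + (-2)*(Yv m 0)*(Yv m 1)*(Zv m 3) + (-1)*(Yv m 0)^2*(Zv m 4) + (Xv m 2)^2 + (2)*(Xv m 1)*(Xv m 3) + (2)*(Xv m 0)*(Xv m 4))
      - (((2)*(Xv m 4)) * Xv m 0 + ((2)*(Xv m 3)) * Xv m 1 + ((-2)*(Yv m 4)*(Zv m 0) + (-2)*(Yv m 3)*(Zv m 1) + (-2)*(Yv m 2)*(Zv m 2) + (-2)*(Yv m 1)*(Zv m 3) + (-1)*(Yv m 0)*(Zv m 4)) * Yv m 0
        + ((3)*(Zv m 2)^2 + (6)*(Zv m 1)*(Zv m 3) + (3)*(Zv m 0)*(Zv m 4) + (-1)*(Yv m 2)^2 + (-2)*(Yv m 1)*(Yv m 3)) * Zv m 0 + ((3)*(Zv m 1)*(Zv m 2) + (-3)*(Yv m 1)*(Zv m 2) + (-2)*(Yv m 1)*(Yv m 2)) * (Yv m 1 + Zv m 1)) := by ring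
  rw [key]
  refine Ideal.sub_mem _ h ?_
  refine Ideal.add_mem _ (Ideal.add_mem _ (Ideal.add_mem _ (Ideal.add_mem _ ?_ ?_) ?_) ?_) ?_
  · exact Ideal.mul_mem_left _ _ (gen_mem_Jd m 3 _ (Or.inr (Or.inr ⟨by simp, rfl⟩)))
  · exact Ideal.mul_mem_left _ _ (gen_mem_Jd m 3 _ (Or.inr (Or.inr ⟨by simp, rfl⟩)))
  · exact Ideal.mul_mem_left _ _ (gen_mem_Jd m 3 _ (Or.inr (Or.inr ⟨by simp, rfl⟩)))
  · exact Ideal.mul_mem_left _ _ (gen_mem_Jd m 3 _ (Or.inr (Or.inr ⟨by simp, rfl⟩)))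
  · exact Ideal.mul_mem_left _ _ (gen_mem_Jd m 3 _ (Or.inr (Or.inr ⟨by simp, rfl⟩)))

lemma G5_mem_3 (m : ℕ) (hm : 5 ≤ m) : ((-3)*(Yv m 1)*(Zv m 2)^2 + (-2)*(Yv m 1)*(Yv m 2)*(Zv m 2) + (Yv m 1)*(Yv m 2)^2 + (2)*(Yv m 1)^2*(Zv m 3) + (2)*(Yv m 1)^2*(Yv m 3) + (2)*(Xv m 2)*(Xv m 3)) ∈ Jd m 3 := by
  have h := fD_mem_Jd m 3 5 (by omega)
  rw [fD5_eq m hm] at h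
  have key : ((-3)*(Yv m 1)*(Zv m 2)^2 + (-2)*(Yv m 1)*(Yv m 2)*(Zv m 2) + (Yv m 1)*(Yv m 2)^2 + (2)*(Yv m 1)^2*(Zv m 3) + (2)*(Yv m 1)^2*(Yv m 3) + (2)*(Xv m 2)*(Xv m 3)) = ((3)*(Zv m 1)*(Zv m 2)^2 + (3)*(Zv m 1)^2*(Zv m 3) + (6)*(Zv m 0)*(Zv m 2)*(Zv m 3) + (6)*(Zv m 0)*(Zv m 1)*(Zv m 4) + (3)*(Zv m 0)^2*(Zv m 5) + (-2)*(Yv m 2)*(Yv m 3)*(Zv m 0) + (-1)*(Yv m 2)^2*(Zv m 1) + (-2)*(Yv m 1)*(Yv m 4)*(Zv m 0) + (-2)*(Yv m 1)*(Yv m 3)*(Zv m 1) + (-2)*(Yv m 1)*(Yv m 2)*(Zv m 2) + (-1)*(Yv m 1)^2*(Zv m 3) + (-2)*(Yv m 0)*(Yv m 5)*(Zv m 0) + (-2)*(Yv m 0)*(Yv m 4)*(Zv m 1) + (-2)*(Yv m 0)*(Yv m 3)*(Zv m 2) + (-2)*(Yv m 0)*(Yv m 2)*(Zv m 3) + (-2)*(Yv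 m 0)*(Yv m 1)*(Zv m 4) + (-1)*(Yv m 0)^2*(Zv m 5) + (2)*(Xv m 2)*(Xv m 3) + (2)*(Xv m 1)*(Xv m 4) + (2)*(Xv m 0)*(Xv m 5))
      - (((2)*(Xv m 5)) * Xv m 0 + ((2)*(Xv m 4)) * Xv m 1 + ((-2)*(Yv m 5)*(Zv m 0) + (-2)*(Yv m 4)*(Zv m 1) + (-2)*(Yv m 3)*(Zv m 2) + (-2)*(Yv m 2)*(Zv m 3) + (-2)*(Yv m 1)*(Zv m 4) + (-1)*(Yv m 0)*(Zv m 5)) * Yv m 0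
        + ((6)*(Zv m 2)*(Zv m 3) + (6)*(Zv m 1)*(Zv m 4) + (3)*(Zv m 0)*(Zv m 5) + (-2)*(Yv m 2)*(Yv m 3) + (-2)*(Yv m 1)*(Yv m 4)) * Zv m 0 + ((3)*(Zv m 2)^2 + (3)*(Zv m 1)*(Zv m 3) + (-1)*(Yv m 2)^2 + (-3)*(Yv m 1)*(Zv m 3) + (-2)*(Yv m 1)*(Yv m 3)) * (Yv m 1 + Zv m 1)) := by ring
  rw [key]
  refine Ideal.sub_mem _ h ?_
  refine Ideal.add_mem _ (Ideal.add_mem _ (Ideal.add_mem _ (Ideal.add_mem _ ?_ ?_) ?_) ?_) ?_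
  · exact Ideal.mul_mem_left _ _ (gen_mem_Jd m 3 _ (Or.inr (Or.inr ⟨by simp, rfl⟩)))
  · exact Ideal.mul_mem_left _ _ (gen_mem_Jd m 3 _ (Or.inr (Or.inr ⟨by simp, rfl⟩)))
  · exact Ideal.mul_mem_left _ _ (gen_mem_Jd m 3 _ (Or.inr (Or.inr ⟨by simp, rfl⟩)))
  · exact Ideal.mul_mem_left _ _ (gen_mem_Jd m 3 _ (Or.inr (Or.inr ⟨by simp, rfl⟩)))
  · exact Ideal.mul_mem_left _ _ (gen_mem_Jd m 3 _ (Or.inr (Or.inr ⟨by simp, rfl⟩)))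

lemma sat_mem_3 (m : ℕ) (hm : 5 ≤ m) : ((9)*(Zv m 2)^4 + (12)*(Yv m 2)*(Zv m 2)^3 + (-2)*(Yv m 2)^2*(Zv m 2)^2 + (-4)*(Yv m 2)^3*(Zv m 2) + (Yv m 2)^4 + (-12)*(Yv m 1)*(Zv m 2)^2*(Zv m 3) + (-12)*(Yv m 1)*(Yv m 3)*(Zv m 2)^2 + (-8)*(Yv m 1)*(Yv m 2)*(Zv m 2)*(Zv m 3) + (-8)*(Yv m 1)*(Yv m 2)*(Yv m 3)*(Zv m 2) + (4)*(Yv m 1)*(Yv m 2)^2*(Zv m 3) + (4)*(Yv m 1)*(Yv m 2)^2*(Yv m 3) + (4)*(Yv m 1)^2*(Zv m 3)^2 + (8)*(Yv m 1)^2*(Yv m 3)*(Zv m 3) + (4)*(Yv m 1)^2*(Yv m 3)^2 + (8)*(Xv m 3)^2*(Zv m 2) + (8)*(Xv m 3)^2*(Yv m 2)) ∈ Idl m 3 := by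
  rw [Idl, if_neg (by norm_num)]
  apply mem_contrAway_of 2
  have key : (Yv m 1)^2 * ((9)*(Zv m 2)^4 + (12)*(Yv m 2)*(Zv m 2)^3 + (-2)*(Yv m 2)^2*(Zv m 2)^2 + (-4)*(Yv m 2)^3*(Zv m 2) + (Yv m 2)^4 + (-12)*(Yv m 1)*(Zv m 2)^2*(Zv m 3) + (-12)*(Yv m 1)*(Yv m 3)*(Zv m 2)^2 + (-8)*(Yv m 1)*(Yv m 2)*(Zv m 2)*(Zv m 3) + (-8)*(Yv m 1)*(Yv m 2)*(Yv m 3)*(Zv m 2) + (4)*(Yv m 1)*(Yv m 2)^2*(Zv m 3) + (4)*(Yv m 1)*(Yv m 2)^2*(Yv m 3) + (4)*(Yv m 1)^2*(Zv m 3)^2 + (8)*(Yv m 1)^2*(Yv m 3)*(Zv m 3) + (4)*(Yv m 1)^2*(Yv m 3)^2 + (8)*(Xv m 3)^2*(Zv m 2) + (8)*(Xv m 3)^2*(Yv m 2))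
      = (4*(Xv m 3)^2) * ((2)*(Yv m 1)^2*(Zv m 2) + (2)*(Yv m 1)^2*(Yv m 2) + (Xv m 2)^2) + (((-3)*(Yv m 1)*(Zv m 2)^2 + (-2)*(Yv m 1)*(Yv m 2)*(Zv m 2) + (Yv m 1)*(Yv m 2)^2 + (2)*(Yv m 1)^2*(Zv m 3) + (2)*(Yv m 1)^2*(Yv m 3) + (2)*(Xv m 2)*(Xv m 3)) - 4*(Xv m 2)*(Xv m 3)) * ((-3)*(Yv m 1)*(Zv m 2)^2 + (-2)*(Yv m 1)*(Yv m 2)*(Zv m 2) + (Yv m 1)*(Yv m 2)^2 + (2)*(Yv m 1)^2*(Zv m 3) + (2)*(Yv m 1)^2*(Yv m 3) + (2)*(Xv m 2)*(Xv m 3)) := by ring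
  rw [key]
  exact Ideal.add_mem _ (Ideal.mul_mem_left _ _ (G4_mem_3 m hm))
    (Ideal.mul_mem_left _ _ (G5_mem_3 m hm))



lemma not_mem_1_one (m : ℕ) (hm : 5 ≤ m) : ptq m 1 ∉ Zd m 1 := by
  intro h
  have h0 := h _ (sat_mem_1 m hm)
  simp only [map_add, map_sub, map_mul, map_pow, map_neg, map_one, map_ofNat,
    pt_eval_Xv, pt_eval_Yv m hm, pt_eval_Zv m hm] at h0
  norm_num at h0


lemma not_mem_1_negone (m : ℕ) (hm : 5 ≤ m) : ptq m (-1) ∉ Zd m 1 := by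
  intro h
  have h0 := h _ (sat_mem_1 m hm)
  simp only [map_add, map_sub, map_mul, map_pow, map_neg, map_one, map_ofNat,
    pt_eval_Xv, pt_eval_Yv m hm, pt_eval_Zv m hm] at h0
  norm_num at h0


lemma not_mem_2_zero (m : ℕ) (hm : 5 ≤ m) : ptq m 0 ∉ Zd m 2 := by
  intro h
  have h0 := h _ (sat_mem_2 m hm)
  simp only [map_add, map_sub, map_mul, map_pow, map_neg, map_one, map_ofNat,
    pt_eval_Xv, pt_eval_Yv m hm, pt_eval_Zv m hm] at h0
  norm_num at h0


lemma not_mem_2_negone (m : ℕ) (hm : 5 ≤ m) : ptq m (-1) ∉ Zd m 2 := by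
  intro h
  have h0 := h _ (sat_mem_2 m hm)
  simp only [map_add, map_sub, map_mul, map_pow, map_neg, map_one, map_ofNat,
    pt_eval_Xv, pt_eval_Yv m hm, pt_eval_Zv m hm] at h0
  norm_num at h0


lemma not_mem_3_zero (m : ℕ) (hm : 5 ≤ m) : ptq m 0 ∉ Zd m 3 := by
  intro h
  have h0 := h _ (sat_mem_3 m hm)
  simp only [map_add, map_sub, map_mul, map_pow, map_neg, map_one, map_ofNat,
    pt_eval_Xv, pt_eval_Yv m hm, pt_eval_Zv m hm] at h0
  norm_num at h0


lemma not_mem_3_one (m : ℕ) (hm : 5 ≤ m) : ptq m 1 ∉ Zd m 3 := by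
  intro h
  have h0 := h _ (sat_mem_3 m hm)
  simp only [map_add, map_sub, map_mul, map_pow, map_neg, map_one, map_ofNat,
    pt_eval_Xv, pt_eval_Yv m hm, pt_eval_Zv m hm] at h0
  norm_num at h0



theorem stmt19 (m : ℕ) (hm : 5 ≤ m) :
    {S | Maximal
        (· ∈ {S : Set (Pt m) | ∃ i j : ℕ, i ≤ 3 ∧ j ≤ 3 ∧ i ≠ j ∧ S = Zd m i ∩ Zd m j}) S}
      = {Zd m 0 ∩ Zd m 1, Zd m 0 ∩ Zd m 2, Zd m 0 ∩ Zd m 3} ∧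
    Zd m 0 ∩ Zd m 1 ≠ Zd m 0 ∩ Zd m 2 ∧
    Zd m 0 ∩ Zd m 1 ≠ Zd m 0 ∩ Zd m 3 ∧
    Zd m 0 ∩ Zd m 2 ≠ Zd m 0 ∩ Zd m 3 := by
  have hZ01 : ptq m 0 ∈ Zd m 0 ∩ Zd m 1 :=
    ⟨pt_mem_Z0 m hm 0 (by norm_num), pt_mem_Z1 m hm⟩
  have hZ02 : ptq m 1 ∈ Zd m 0 ∩ Zd m 2 :=
    ⟨pt_mem_Z0 m hm 1 (by norm_num), pt_mem_Z2 m hm⟩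
  have hZ03 : ptq m (-1) ∈ Zd m 0 ∩ Zd m 3 :=
    ⟨pt_mem_Z0 m hm (-1) (by norm_num), pt_mem_Z3 m hm⟩
  -- no containments among the Z0 ∩ Za
  have nc : ∀ a b : ℕ, 1 ≤ a → a ≤ 3 → 1 ≤ b → b ≤ 3 → a ≠ b →
      ¬ (Zd m 0 ∩ Zd m a ⊆ Zd m b) := by
    intro a b ha1 ha3 hb1 hb3 hab hsub
    interval_cases a <;> interval_cases b
    · exact hab rfl
    · exact not_mem_2_zero m hm (hsub hZ01)
    · exact not_mem_3_zero m hm (hsub hZ01)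
    · exact not_mem_1_one m hm (hsub hZ02)
    · exact hab rfl
    · exact not_mem_3_one m hm (hsub hZ02)
    · exact not_mem_1_negone m hm (hsub hZ03)
    · exact not_mem_2_negone m hm (hsub hZ03)
    · exact hab rfl
  -- intersections among nonzero components lie in Z0
  have hsub0 : ∀ i j : ℕ, 1 ≤ i → i ≤ 3 → 1 ≤ j → j ≤ 3 → i ≠ j →
      Zd m i ∩ Zd m j ⊆ Zd m 0 := by
    intro i j hi1 hi3 hj1 hj3 hij
    interval_cases i <;> interval_cases j
    · exact absurd rfl hij
    · exact Z12_sub m hm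
    · exact Z13_sub m hm
    · exact fun p hp => Z12_sub m hm ⟨hp.2, hp.1⟩
    · exact absurd rfl hij
    · exact Z23_sub m hm
    · exact fun p hp => Z13_sub m hm ⟨hp.2, hp.1⟩
    · exact fun p hp => Z23_sub m hm ⟨hp.2, hp.1⟩
    · exact absurd rfl hij
  refine ⟨?_, fun h => not_mem_2_zero m hm (h ▸ hZ01).2,
    fun h => not_mem_3_zero m hm (h ▸ hZ01).2,
    fun h => not_mem_3_one m hm (h ▸ hZ02).2⟩
  ext S
  simp only [Set.mem_setOf_eq, Set.mem_insert_iff, Set.mem_singleton_iff]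
  constructor
  · rintro ⟨⟨i, j, hi, hj, hij, rfl⟩, hmax⟩
    by_cases hi0 : i = 0
    · subst hi0
      have hj1 : 1 ≤ j := by omega
      interval_cases j
      · exact Or.inl rfl
      · exact Or.inr (Or.inl rfl)
      · exact Or.inr (Or.inr rfl)
    · by_cases hj0 : j = 0
      · subst hj0
        rw [Set.inter_comm]
        have hi1 : 1 ≤ i := by omega
        interval_cases i
        · exact Or.inl rfl
        · exact Or.inr (Or.inl rfl)
        · exact Or.inr (Or.inr rfl)
      · -- both nonzero: S = Z0 ∩ Zi by maximality
        have hs : Zd m i ∩ Zd m j ⊆ Zd m 0 ∩ Zd m i :=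
          fun p hp => ⟨hsub0 i j (by omega) hi (by omega) hj hij hp, hp.1⟩
        have hT : Zd m 0 ∩ Zd m i
            ∈ {S : Set (Pt m) | ∃ i j : ℕ, i ≤ 3 ∧ j ≤ 3 ∧ i ≠ j ∧ S = Zd m i ∩ Zd m j} :=
          ⟨0, i, by omega, hi, by omega, rfl⟩
        have heq : Zd m i ∩ Zd m j = Zd m 0 ∩ Zd m i :=
          Set.Subset.antisymm hs (hmax hT hs)
        rw [heq]
        have hi1 : 1 ≤ i := by omega
        interval_cases i
        · exact Or.inl rfl
        · exact Or.inr (Or.inl rfl)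
        · exact Or.inr (Or.inr rfl)
  · -- each Z0 ∩ Zk is maximal
    have maxlem : ∀ k : ℕ, 1 ≤ k → k ≤ 3 →
        Maximal (· ∈ {S : Set (Pt m) | ∃ i j : ℕ, i ≤ 3 ∧ j ≤ 3 ∧ i ≠ j ∧ S = Zd m i ∩ Zd m j})
          (Zd m 0 ∩ Zd m k) := by
      intro k hk1 hk3
      refine ⟨⟨0, k, by omega, by omega, by omega, rfl⟩, ?_⟩
      rintro T ⟨i, j, hi, hj, hij, rfl⟩ hST
      by_cases hi0 : i = 0
      · subst hi0
        by_cases hjk : j = k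
        · subst hjk; exact fun p hp => hp
        · exact absurd (fun p hp => (hST hp).2)
            (nc k j hk1 hk3 (by omega) hj (fun h => hjk h.symm))
      · by_cases hj0 : j = 0
        · subst hj0
          by_cases hik : i = k
          · subst hik; intro p hp; exact ⟨hp.2, hp.1⟩
          · exact absurd (fun p hp => (hST hp).1)
              (nc k i hk1 hk3 (by omega) hi (fun h => hik h.symm))
        · by_cases hik : i = k
          · subst hik
            exact absurd (fun p hp => (hST hp).2)
              (nc i j hk1 hk3 (by omega) hj (by omega))
          · exact absurd (fun p hp => (hST hp).1)
              (nc k i hk1 hk3 (by omega) hi (fun h => hik h.symm))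
    rintro (rfl|rfl|rfl)
    · exact maxlem 1 (by omega) (by omega)
    · exact maxlem 2 (by omega) (by omega)
    · exact maxlem 3 (by omega) (by omega)


end
end
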